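/- Define the sequence (μ_i)_{i≥0} in ℝ³ by μ_0 = (3/4, 1/4, 0) and μ_{i+1} = G_{p_i}(μ_i) with p_i = 2/(2^i + 2). Then for every i ≥ 0, μ_i = (1/4 + 2^{-(i+1)}, 1/4, 1/2 − 2^{-(i+1)}); in particular each μ_i lies in the probability simplex and its second coordinate equals 1/4 for all i, so μ_0 is H-safe for H = {μ : μ(B) = 1/4} under this Markov strategy. -/
import Mathlib


/-- `G p (a,b,c) = (p·a + c/2, (1−p)·a, b + c/2)`: one step of the running-example MDP
when action `a` is chosen in state `A` with probability `p` (and `b` with probability `1−p`). -/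
noncomputable def G (p : ℝ) : ℝ × ℝ × ℝ → ℝ × ℝ × ℝ :=
  fun q => (p * q.1 + q.2.2 / 2, (1 - p) * q.1, q.2.1 + q.2.2 / 2)

/-- The stream induced by the Markov strategy `p_i = 2/(2^i + 2)` from `μ_0 = (3/4, 1/4, 0)`. -/
noncomputable def mu : ℕ → ℝ × ℝ × ℝ
  | 0 => (3 / 4, 1 / 4, 0)
  | i + 1 => G (2 / (2 ^ i + 2)) (mu i)

lemma mu_eq : ∀ i : ℕ,
    mu i = (1 / 4 + ((2 : ℝ) ^ (i + 1))⁻¹, 1 / 4, 1 / 2 - ((2 : ℝ) ^ (i + 1))⁻¹) := by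
  intro i
  induction i with
  | zero => simp [mu]; norm_num
  | succ n ih =>
    have h2 : (2 : ℝ) ^ n ≠ 0 := by positivity
    have h3 : (2 : ℝ) ^ n + 2 ≠ 0 := by positivity
    simp only [mu, ih, G, Prod.mk.injEq]
    refine ⟨?_, ?_, ?_⟩ <;> field_simp <;> ring

theorem mu_formula : ∀ i : ℕ,
    mu i = (1 / 4 + ((2 : ℝ) ^ (i + 1))⁻¹, 1 / 4, 1 / 2 - ((2 : ℝ) ^ (i + 1))⁻¹) ∧
    (0 ≤ (mu i).1 ∧ 0 ≤ (mu i).2.1 ∧ 0 ≤ (mu i).2.2 ∧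
      (mu i).1 + (mu i).2.1 + (mu i).2.2 = 1) ∧
    (mu i).2.1 = 1 / 4 := by
  intro i
  have h := mu_eq i
  have h1 : ((2 : ℝ) ^ (i + 1))⁻¹ ≤ 1 / 2 := by
    rw [inv_le_comm₀ (by positivity) (by norm_num)]
    calc (1/2 : ℝ)⁻¹ = 2 ^ 1 := by norm_num
    _ ≤ 2 ^ (i+1) := by
      exact pow_le_pow_right₀ (by norm_num) (by omega)
  have h0 : (0:ℝ) < ((2 : ℝ) ^ (i + 1))⁻¹ := by positivity
  rw [h]
  refine ⟨rfl, ⟨by simp; linarith, by norm_num, by simp; linarith, by ring⟩, rfl⟩
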